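/- Let X be an intrinsic δ-hyperbolic space, 0 < ε ≤ ε₀ with h < 1/13 as in the Gehring–Hayman theorem with constant K, and let x, y ∈ X with ε d(x,y) > 1/2. Let γ : x ↷ y be an h-short arc with l(γ) ≤ 2 d(x,y) and subdivision point x_γ induced by p. Then d_ε(x,y) ≥ (1 − e^{−1/4}) ρ_ε(x_γ)/(K ε). -/

import Mathlib

open Set Filter Metric MeasureTheory

/-- Conformal density `ρ_ε(x) = exp(-ε d(x,p))`. -/
noncomputable def rho {X : Type*} [MetricSpace X] (ε : ℝ) (p x : X) : ℝ :=
  Real.exp (-(ε * dist x p))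

/-- `γ : [0,L] → X` is a curve parametrized by arclength: continuous, and the
length (total variation) of `γ` on `[s,t] ⊆ [0,L]` equals `t - s`. -/
def IsUnitSpeed {X : Type*} [MetricSpace X] (γ : ℝ → X) (L : ℝ) : Prop :=
  ContinuousOn γ (Set.Icc 0 L) ∧
    ∀ s t : ℝ, 0 ≤ s → s ≤ t → t ≤ L →
      eVariationOn γ (Set.Icc s t) = ENNReal.ofReal (t - s)

/-- Conformal deformation distance `d_ρ(x,y) = inf_γ ∫_γ ρ ds`, the infimum taken
over rectifiable curves from `x` to `y` (parametrized by arclength). -/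
noncomputable def confDist {X : Type*} [MetricSpace X] (ρ : X → ℝ) (x y : X) : ℝ :=
  sInf { l : ℝ | ∃ (γ : ℝ → X) (T : ℝ), 0 ≤ T ∧ IsUnitSpeed γ T ∧
    γ 0 = x ∧ γ T = y ∧ l = ∫ t in (0:ℝ)..T, ρ (γ t) }

/-- `X` is intrinsic: any two points can be joined, for each `c > 1`, by a curve
of length at most `c·d(x,y)`. -/
def Intrinsic (X : Type*) [MetricSpace X] : Prop :=
  ∀ x y : X, ∀ c : ℝ, 1 < c → ∃ (γ : ℝ → X) (T : ℝ), 0 ≤ T ∧ IsUnitSpeed γ T ∧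
    γ 0 = x ∧ γ T = y ∧ T ≤ c * dist x y

/-- Gromov product `(x|y)_p`. -/
noncomputable def gprod {X : Type*} [MetricSpace X] (x y p : X) : ℝ :=
  (dist x p + dist y p - dist x y) / 2

/-- `X` is Gromov `δ`-hyperbolic. -/
def GromovHyperbolic (X : Type*) [MetricSpace X] (δ : ℝ) : Prop :=
  ∀ x y z p : X, gprod x z p ≥ min (gprod x y p) (gprod y z p) - δ

/-- A sequence is Cauchy with respect to a (possibly different) distance function `d`. -/
def CauchyIn {X : Type*} (d : X → X → ℝ) (u : ℕ → X) : Prop :=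
  ∀ η : ℝ, 0 < η → ∃ N : ℕ, ∀ m n : ℕ, N ≤ m → N ≤ n → d (u m) (u n) < η

/-- A sequence does not converge to any point of `X` with respect to `d`. -/
def DivergesIn {X : Type*} (d : X → X → ℝ) (u : ℕ → X) : Prop :=
  ¬ ∃ z : X, Filter.Tendsto (fun n => d (u n) z) Filter.atTop (nhds 0)

/-- A sequence representing a point of the metric boundary of `(X, d)`:
`d`-Cauchy but not `d`-convergent in `X`. -/
def BoundarySeq {X : Type*} (d : X → X → ℝ) (u : ℕ → X) : Prop :=
  CauchyIn d u ∧ DivergesIn d u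

/-- Distance from `z` to the metric boundary of `(X,d)`: infimum, over boundary
points (represented by Cauchy non-convergent sequences), of the limiting distance. -/
noncomputable def bdryDist {X : Type*} (d : X → X → ℝ) (z : X) : ℝ :=
  sInf { r : ℝ | ∃ u : ℕ → X, BoundarySeq d u ∧
    Filter.Tendsto (fun n => d z (u n)) Filter.atTop (nhds r) }

/-- A Gromov sequence: `(u_i|u_j)_p → ∞` as `i, j → ∞`. -/
def GromovSeq {X : Type*} [MetricSpace X] (p : X) (u : ℕ → X) : Prop :=
  Filter.Tendsto (fun nm : ℕ × ℕ => gprod (u nm.1) (u nm.2) p)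
    Filter.atTop Filter.atTop


private lemma exp_int_fwd (ε a b : ℝ) (hε : 0 < ε) :
    ∫ t in a..b, Real.exp (-(ε * (t - a))) =
      (1 - Real.exp (-(ε * (b - a)))) / ε := by
  have hderiv : ∀ t ∈ Set.uIcc a b,
      HasDerivAt (fun t => -Real.exp (-(ε * (t - a))) / ε)
        (Real.exp (-(ε * (t - a)))) t := by
    intro t _
    have h1 : HasDerivAt (fun t : ℝ => -(ε * (t - a))) (-ε) t := by
      simpa using (((hasDerivAt_id t).sub_const a).const_mul ε).fun_neg
    have h2 := (h1.exp).neg.div_const ε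
    have e : -(Real.exp (-(ε * (t - a))) * -ε) / ε = Real.exp (-(ε * (t - a))) := by
      rw [mul_neg, neg_neg, mul_div_assoc, div_self hε.ne', mul_one]
    rw [e] at h2; exact h2
  have hint : IntervalIntegrable (fun t => Real.exp (-(ε * (t - a))))
      MeasureTheory.volume a b :=
    (Continuous.continuousOn (Real.continuous_exp.comp
      ((continuous_const.mul (continuous_id.sub continuous_const)).neg))).intervalIntegrable
  rw [intervalIntegral.integral_eq_sub_of_hasDerivAt hderiv hint]
  field_simp
  simp only [sub_self, mul_zero, neg_zero, Real.exp_zero]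
  ring

private lemma exp_int_bwd (ε a c : ℝ) (hε : 0 < ε) :
    ∫ t in c..a, Real.exp (-(ε * (a - t))) =
      (1 - Real.exp (-(ε * (a - c)))) / ε := by
  have hderiv : ∀ t ∈ Set.uIcc c a,
      HasDerivAt (fun t => Real.exp (-(ε * (a - t))) / ε)
        (Real.exp (-(ε * (a - t)))) t := by
    intro t _
    have h1 : HasDerivAt (fun t : ℝ => -(ε * (a - t))) ε t := by
      simpa using (((hasDerivAt_id t).const_sub a).const_mul ε).fun_neg
    have h2 := (h1.exp).div_const ε
    have e : Real.exp (-(ε * (a - t))) * ε / ε = Real.exp (-(ε * (a - t))) := by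
      rw [mul_div_assoc, div_self hε.ne', mul_one]
    rw [e] at h2; exact h2
  have hint : IntervalIntegrable (fun t => Real.exp (-(ε * (a - t))))
      MeasureTheory.volume c a :=
    (Continuous.continuousOn (Real.continuous_exp.comp
      ((continuous_const.mul (continuous_const.sub continuous_id)).neg))).intervalIntegrable
  rw [intervalIntegral.integral_eq_sub_of_hasDerivAt hderiv hint]
  have : Real.exp (-(ε * (a - a))) = 1 := by simp
  rw [this]
  ring

/-- at large scale `ε d(x,y) > 1/2`, with the Gehring–Hayman
estimate with constant `K` available, an `h`-short arc `γ : x ↷ y` with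
`l(γ) ≤ 2 d(x,y)` and subdivision point `x_γ = γ a` induced by `p` gives
`d_ε(x,y) ≥ (1 - e^{-1/4}) ρ_ε(x_γ)/(K ε)`. -/
theorem confDist_lower_large_scale {X : Type*} [MetricSpace X]
    (δ h ε K : ℝ) (hδ : 0 ≤ δ) (hh : 0 < h) (hh13 : h < 1 / 13)
    (hε : 0 < ε) (hK : 1 ≤ K)
    (hint : Intrinsic X) (hhyp : GromovHyperbolic X δ)
    (p x y : X) (hxy : 1 / 2 < ε * dist x y)
    -- Gehring–Hayman: every h-short arc from x to y with l ≤ 2 d(x,y) is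
    -- K-efficient for the density ρ_ε
    (hGH : ∀ (σ : ℝ → X) (T : ℝ), 0 ≤ T → IsUnitSpeed σ T → σ 0 = x → σ T = y →
      T ≤ dist x y + h → T ≤ 2 * dist x y →
      (∫ t in (0:ℝ)..T, rho ε p (σ t)) ≤ K * confDist (rho ε p) x y)
    (γ : ℝ → X) (L : ℝ) (hL : 0 ≤ L) (hus : IsUnitSpeed γ L)
    (h0 : γ 0 = x) (hLy : γ L = y)
    (hshort : L ≤ dist x y + h) (hlen : L ≤ 2 * dist x y)
    (a : ℝ) (ha : a ∈ Set.Icc 0 L) (haval : a = gprod y p x) :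
    (1 - Real.exp (-(1 / 4))) * rho ε p (γ a) / (K * ε) ≤
      confDist (rho ε p) x y :=
  by
  classical
  set d := dist x y with hd
  have hεd : 1 / 2 < ε * d := hxy
  have hd0 : 0 < d := by
    by_contra h'
    push_neg at h'
    nlinarith [mul_nonpos_of_nonneg_of_nonpos hε.le h']
  -- L ≥ d
  have hLd : d ≤ L := by
    have := eVariationOn.edist_le γ (Set.mem_Icc.2 ⟨le_refl 0, hL⟩)
      (Set.mem_Icc.2 ⟨hL, le_refl L⟩)
    rw [hus.2 0 L (le_refl 0) hL (le_refl L)] at this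
    rw [h0, hLy, edist_dist] at this
    have := ENNReal.ofReal_le_ofReal_iff (by linarith) |>.1 this
    simpa [hd] using this
  -- γ is 1-Lipschitz on [0,L]
  have hlip : ∀ s t : ℝ, s ∈ Set.Icc 0 L → t ∈ Set.Icc 0 L →
      dist (γ s) (γ t) ≤ |t - s| := by
    have key : ∀ s t : ℝ, 0 ≤ s → s ≤ t → t ≤ L → dist (γ s) (γ t) ≤ t - s := by
      intro s t hs hst htL
      have := eVariationOn.edist_le γ (x := s) (y := t)
        (Set.mem_Icc.2 ⟨le_refl s, hst⟩) (Set.mem_Icc.2 ⟨hst, le_refl t⟩)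
      rw [hus.2 s t hs hst htL, edist_dist] at this
      exact (ENNReal.ofReal_le_ofReal_iff (by linarith)).1 this
    intro s t hs ht
    rcases le_total s t with h | h
    · rw [abs_of_nonneg (by linarith)]
      exact key s t hs.1 h ht.2
    · rw [abs_of_nonpos (by linarith), dist_comm]
      have := key t s ht.1 h hs.2
      linarith
  -- pointwise lower bound for rho along γ
  have hpt : ∀ t ∈ Set.Icc 0 L,
      rho ε p (γ a) * Real.exp (-(ε * |t - a|)) ≤ rho ε p (γ t) := by
    intro t ht
    have h1 : dist (γ t) p ≤ dist (γ a) p + |t - a| := by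
      calc dist (γ t) p ≤ dist (γ t) (γ a) + dist (γ a) p := dist_triangle _ _ _
        _ ≤ |t - a| + dist (γ a) p := by
            have := hlip a t ha ht
            rw [dist_comm] at this; linarith
        _ = _ := by ring
    unfold rho
    rw [← Real.exp_add]
    apply Real.exp_le_exp.2
    nlinarith [hε.le, abs_nonneg (t - a)]
  -- continuity / integrability of rho ∘ γ
  have hcontρ : ContinuousOn (fun t => rho ε p (γ t)) (Set.Icc 0 L) := by
    have : Continuous fun z : X => rho ε p z :=
      Real.continuous_exp.comp ((continuous_const.mul (continuous_id.dist continuous_const)).neg)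
    exact this.comp_continuousOn hus.1
  have hρnonneg : ∀ t, 0 ≤ rho ε p (γ t) := fun t => (Real.exp_pos _).le
  -- the subinterval
  set m := d / 2 with hm
  have hm0 : 0 < m := by positivity
  -- key exponential estimate
  have hexp14 : Real.exp (-(ε * m)) ≤ Real.exp (-(1/4)) := by
    apply Real.exp_le_exp.2
    rw [hm]; nlinarith
  have hρa : 0 < rho ε p (γ a) := Real.exp_pos _
  -- common target: lower bound on the full integral
  have hmain : (1 - Real.exp (-(1/4))) * rho ε p (γ a) / ε ≤
      ∫ t in (0:ℝ)..L, rho ε p (γ t) := by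
    have hbound : (1 - Real.exp (-(1/4))) * rho ε p (γ a) / ε ≤
        rho ε p (γ a) * ((1 - Real.exp (-(ε * m))) / ε) := by
      rw [div_le_iff₀ hε]
      have heq : rho ε p (γ a) * ((1 - Real.exp (-(ε * m))) / ε) * ε =
          rho ε p (γ a) * (1 - Real.exp (-(ε * m))) := by
        field_simp
      rw [heq]
      nlinarith [hρa]
    rcases le_total a (L - a) with hside | hside
    · -- forward interval [a, a+m]
      have hsub : a + m ≤ L := by
        have : m ≤ L / 2 := by rw [hm]; linarith
        linarith [ha.1, ha.2]
      have hintlow : IntervalIntegrable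
          (fun t => rho ε p (γ a) * Real.exp (-(ε * (t - a))))
          MeasureTheory.volume a (a + m) :=
        (Continuous.continuousOn (continuous_const.mul (Real.continuous_exp.comp
          ((continuous_const.mul (continuous_id.sub continuous_const)).neg)))).intervalIntegrable
      have hintρ : IntervalIntegrable (fun t => rho ε p (γ t))
          MeasureTheory.volume a (a + m) := by
        apply (hcontρ.mono _).intervalIntegrable
        rw [Set.uIcc_of_le (by linarith)]
        exact Set.Icc_subset_Icc ha.1 hsub
      have h1 : rho ε p (γ a) * ((1 - Real.exp (-(ε * m))) / ε) ≤
          ∫ t in a..(a + m), rho ε p (γ t) := by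
        have heq : ∫ t in a..(a + m),
            rho ε p (γ a) * Real.exp (-(ε * (t - a))) =
            rho ε p (γ a) * ((1 - Real.exp (-(ε * m))) / ε) := by
          rw [intervalIntegral.integral_const_mul, exp_int_fwd ε a (a + m) hε]
          norm_num
        rw [← heq]
        apply intervalIntegral.integral_mono_on (by linarith) hintlow hintρ
        intro t ht
        have htL : t ∈ Set.Icc 0 L := ⟨by linarith [ht.1, ha.1], by linarith [ht.2]⟩
        have := hpt t htL
        rwa [abs_of_nonneg (by linarith [ht.1])] at this
      have h2 : (∫ t in a..(a + m), rho ε p (γ t)) ≤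
          ∫ t in (0:ℝ)..L, rho ε p (γ t) := by
        apply intervalIntegral.integral_mono_interval ha.1 (by linarith) hsub
        · filter_upwards with t; exact hρnonneg t
        · apply (hcontρ.mono _).intervalIntegrable
          rw [Set.uIcc_of_le hL]
      linarith
    · -- backward interval [a-m, a]
      have hsub : 0 ≤ a - m := by
        have : m ≤ L / 2 := by rw [hm]; linarith
        linarith [ha.1, ha.2]
      have hintlow : IntervalIntegrable
          (fun t => rho ε p (γ a) * Real.exp (-(ε * (a - t))))
          MeasureTheory.volume (a - m) a :=
        (Continuous.continuousOn (continuous_const.mul (Real.continuous_exp.comp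
          ((continuous_const.mul (continuous_const.sub continuous_id)).neg)))).intervalIntegrable
      have hintρ : IntervalIntegrable (fun t => rho ε p (γ t))
          MeasureTheory.volume (a - m) a := by
        apply (hcontρ.mono _).intervalIntegrable
        rw [Set.uIcc_of_le (by linarith)]
        exact Set.Icc_subset_Icc hsub ha.2
      have h1 : rho ε p (γ a) * ((1 - Real.exp (-(ε * m))) / ε) ≤
          ∫ t in (a - m)..a, rho ε p (γ t) := by
        have heq : ∫ t in (a - m)..a,
            rho ε p (γ a) * Real.exp (-(ε * (a - t))) =
            rho ε p (γ a) * ((1 - Real.exp (-(ε * m))) / ε) := by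
          rw [intervalIntegral.integral_const_mul, exp_int_bwd ε a (a - m) hε]
          norm_num
        rw [← heq]
        apply intervalIntegral.integral_mono_on (by linarith) hintlow hintρ
        intro t ht
        have htL : t ∈ Set.Icc 0 L := ⟨by linarith [ht.1], by linarith [ht.2, ha.2]⟩
        have := hpt t htL
        rwa [abs_of_nonpos (by linarith [ht.2]), neg_sub] at this
      have h2 : (∫ t in (a - m)..a, rho ε p (γ t)) ≤
          ∫ t in (0:ℝ)..L, rho ε p (γ t) := by
        apply intervalIntegral.integral_mono_interval hsub (by linarith) ha.2
        · filter_upwards with t; exact hρnonneg t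
        · apply (hcontρ.mono _).intervalIntegrable
          rw [Set.uIcc_of_le hL]
      linarith
  -- apply Gehring-Hayman
  have hGHγ := hGH γ L hL hus h0 hLy hshort hlen
  have hKε : 0 < K * ε := by positivity
  rw [div_le_iff₀ hKε]
  have hexp1 : Real.exp (-(1/4)) < 1 := by
    rw [Real.exp_lt_one_iff]; norm_num
  have h3 : (1 - Real.exp (-(1/4))) * rho ε p (γ a) / ε ≤ K * confDist (rho ε p) x y := by
    linarith
  rw [div_le_iff₀ hε] at h3
  nlinarith
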